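/- Let X ∈ U(n, 2^s) be a balanced two-level lattice design with n ≥ 2, and map each entry to z_{ij} = (2 x_{ij} + 1)/4 ∈ {1/4, 3/4}. Then CL2²(X) − a_1 = (2/n²) ∑_{1 ≤ i < k ≤ n} (5/4)^{β(x_i, x_k)} ≥ ((n−1)(4+f)/(4n)) (5/4)^θ, where a_1 = (1/n)(5/4)^s + (13/12)^s − 2(35/32)^s, β̄ = s(n−2)/(2(n−1)), θ = ⌊β̄⌋ and f = β̄ − θ. -/

import Mathlib

/-!
At the two levels `1/4` and `3/4` the kernel factor of the centered discrepancy is `5/4` in the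
columns where two rows coincide and `1` elsewhere, while the one-point factor is always `35/32`.
Splitting the double sum into diagonal and off-diagonal pairs therefore leaves `a₁` plus
`(2/n²) ∑_{i<k} (5/4)^β(x_i, x_k)`. Balance fixes the total coincidence
`∑_{i<k} β(x_i, x_k) = s n (n - 2) / 4`, and since the convex sequence `m ↦ (5/4)^m` lies above
its chord through `θ` and `θ + 1`, each term is at least `(5/4)^θ (1 + (β - θ)/4)`; summing
these lower bounds gives the inequality.
-/

open Finset

/-- The coincidence number β(x, w) = #{j : x_j = w_j} of two lattice points. -/
def coincidence {s q : ℕ} (x w : Fin s → Fin q) : ℕ :=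
  (univ.filter fun j => x j = w j).card

/-- A design `X ∈ U(n, q^s)` is balanced: `q ∣ n` and every level occurs exactly
`n / q` times in each column; here `q = 2`. -/
def IsBalanced {n s q : ℕ} (X : Fin n → Fin s → Fin q) : Prop :=
  q ∣ n ∧ ∀ (j : Fin s) (ℓ : Fin q),
    (univ.filter fun i => X i j = ℓ).card = n / q

/-- The index set of pairs 1 ≤ i < k ≤ n. -/
def pairs (n : ℕ) : Finset (Fin n × Fin n) := univ.filter fun p => p.1 < p.2

/-- The design points mapped to [0,1]: z_{ij} = (2 x_{ij} + 1)/4 ∈ {1/4, 3/4}. -/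
noncomputable def zpt2 {n s : ℕ} (X : Fin n → Fin s → Fin 2) (i : Fin n) (j : Fin s) : ℝ :=
  (2 * ((X i j : ℕ) : ℝ) + 1) / 4

/-- The squared centered L₂-discrepancy of the induced point set. -/
noncomputable def CL2sq {n s : ℕ} (X : Fin n → Fin s → Fin 2) : ℝ :=
  (13 / 12 : ℝ) ^ s
    - 2 / (n : ℝ) * ∑ i, ∏ j,
        (1 + |zpt2 X i j - 1 / 2| / 2 - |zpt2 X i j - 1 / 2| ^ 2 / 2)
    + 1 / (n : ℝ) ^ 2 * ∑ i, ∑ k, ∏ j,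
        (1 + |zpt2 X i j - 1 / 2| / 2 + |zpt2 X k j - 1 / 2| / 2
          - |zpt2 X i j - zpt2 X k j| / 2)

theorem sum_sum_eq_sum_diag_add_two_mul_sum_pairs {R : Type*} [NonAssocSemiring R] {n : ℕ}
    (F : Fin n → Fin n → R) (hF : ∀ i k, F i k = F k i) :
    ∑ i, ∑ k, F i k = ∑ i, F i i + 2 * ∑ p ∈ pairs n, F p.1 p.2 := by
  have hpairs : ∑ p ∈ pairs n, F p.1 p.2 = ∑ i, ∑ k, if i < k then F i k else 0 := by
    rw [pairs, sum_filter, Fintype.sum_prod_type]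
  have hsplit : ∀ i k, F i k = (if i = k then F i k else 0) +
      ((if i < k then F i k else 0) + if k < i then F k i else 0) := by
    intro i k
    rcases lt_trichotomy i k with h | rfl | h
    · simp [h, h.ne, h.not_gt]
    · simp
    · simp [h, h.ne', h.not_gt, hF i k]
  simp_rw [sum_congr rfl fun i _ => sum_congr rfl fun k _ => hsplit i k, sum_add_distrib,
    sum_ite_eq, mem_univ, if_true, hpairs,
    sum_comm (γ := Fin n) (f := fun i k => if k < i then F k i else 0), two_mul]

theorem card_pairs (n : ℕ) : #(pairs n) = n.choose 2 := by
  have h := sum_sum_eq_sum_diag_add_two_mul_sum_pairs (R := ℕ) (n := n) (fun _ _ => 1)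
    fun _ _ => rfl
  simp only [sum_const, card_univ, Fintype.card_fin, smul_eq_mul, mul_one] at h
  rw [Nat.choose_two_right, Nat.mul_sub_one]
  omega

theorem pow_mul_one_add_sub_one_mul_le_pow {a : ℝ} (ha : 0 < a) (θ m : ℕ) :
    a ^ θ * (1 + (a - 1) * ((m : ℝ) - θ)) ≤ a ^ m := by
  rcases le_total θ m with h | h
  · obtain ⟨d, rfl⟩ := Nat.exists_eq_add_of_le h
    have hbern := one_add_mul_le_pow (a := a - 1) (by linarith) d
    rw [pow_add]
    gcongr
    push_cast
    simpa [mul_comm] using hbern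
  · obtain ⟨d, rfl⟩ := Nat.exists_eq_add_of_le h
    have hbern := one_add_mul_le_pow (a := a⁻¹ - 1) (by linarith [inv_pos.2 ha]) d
    have hamgm : 1 - a ≤ a⁻¹ - 1 := by
      have hinv : a * a⁻¹ = 1 := mul_inv_cancel₀ ha.ne'
      nlinarith [mul_nonneg (sq_nonneg (a - 1)) (inv_pos.2 ha).le]
    have key : a ^ d * (1 - (a - 1) * d) ≤ 1 := calc
      a ^ d * (1 - (a - 1) * d) ≤ a ^ d * (1 + d * (a⁻¹ - 1)) := by
        gcongr
        nlinarith [Nat.cast_nonneg (α := ℝ) d]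
      _ ≤ a ^ d * a⁻¹ ^ d := by gcongr; simpa using hbern
      _ = 1 := by rw [← mul_pow, mul_inv_cancel₀ ha.ne', one_pow]
    calc a ^ (m + d) * (1 + (a - 1) * ((m : ℝ) - (m + d : ℕ)))
        = a ^ m * (a ^ d * (1 - (a - 1) * d)) := by push_cast; ring
      _ ≤ a ^ m := mul_le_of_le_one_right (by positivity) key

theorem coincidence_comm {s q : ℕ} (x w : Fin s → Fin q) : coincidence x w = coincidence w x := by
  simp only [coincidence, eq_comm]

@[simp]
theorem coincidence_self {s q : ℕ} (x : Fin s → Fin q) : coincidence x x = s := by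
  simp [coincidence]

theorem IsBalanced.sum_sum_coincidence {n s q : ℕ} {X : Fin n → Fin s → Fin q}
    (hX : IsBalanced X) : ∑ i, ∑ k, coincidence (X i) (X k) = s * (n * (n / q)) := by
  have hcolumn : ∀ i j, ∑ k, (if X i j = X k j then 1 else 0) = n / q := fun i j => by
    simp_rw [← card_filter, eq_comm (a := X i j)]
    exact hX.2 j (X i j)
  calc ∑ i, ∑ k, coincidence (X i) (X k)
      = ∑ i, ∑ j, ∑ k, if X i j = X k j then 1 else 0 := by
        simp only [coincidence, card_filter]
        exact sum_congr rfl fun i _ => sum_comm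
    _ = s * (n * (n / q)) := by simp [hcolumn]; ring

theorem IsBalanced.sum_pairs_coincidence {n s q : ℕ} {X : Fin n → Fin s → Fin q}
    (hX : IsBalanced X) :
    ∑ p ∈ pairs n, (coincidence (X p.1) (X p.2) : ℝ) = s * n * ((n : ℝ) / q - 1) / 2 := by
  have h := sum_sum_eq_sum_diag_add_two_mul_sum_pairs _ fun i k => coincidence_comm (X i) (X k)
  rw [hX.sum_sum_coincidence] at h
  simp only [coincidence_self, sum_const, card_univ, Fintype.card_fin, smul_eq_mul] at h
  have hR := congrArg (Nat.cast (R := ℝ)) h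
  push_cast [Nat.cast_div_charZero hX.1] at hR
  linear_combination -hR / 2

theorem zpt2_cross_factor {n s : ℕ} (X : Fin n → Fin s → Fin 2) (i k : Fin n) (j : Fin s) :
    1 + |zpt2 X i j - 1 / 2| / 2 + |zpt2 X k j - 1 / 2| / 2 - |zpt2 X i j - zpt2 X k j| / 2
      = if X i j = X k j then 5 / 4 else 1 := by
  unfold zpt2
  generalize X i j = a, X k j = b
  fin_cases a <;> fin_cases b <;> norm_num [abs_of_nonneg, abs_of_nonpos]

theorem zpt2_diag_factor {n s : ℕ} (X : Fin n → Fin s → Fin 2) (i : Fin n) (j : Fin s) :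
    1 + |zpt2 X i j - 1 / 2| / 2 - |zpt2 X i j - 1 / 2| ^ 2 / 2 = 35 / 32 := by
  unfold zpt2
  generalize X i j = a
  fin_cases a <;> norm_num [abs_of_nonneg, abs_of_nonpos]

theorem CL2sq_eq {n s : ℕ} (hn : n ≠ 0) (X : Fin n → Fin s → Fin 2) :
    CL2sq X = (13 / 12 : ℝ) ^ s - 2 * (35 / 32) ^ s + (5 / 4) ^ s / n
      + 2 / (n : ℝ) ^ 2 * ∑ p ∈ pairs n, (5 / 4 : ℝ) ^ coincidence (X p.1) (X p.2) := by
  have hcross : ∀ i k, ∏ j, (1 + |zpt2 X i j - 1 / 2| / 2 + |zpt2 X k j - 1 / 2| / 2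
      - |zpt2 X i j - zpt2 X k j| / 2) = (5 / 4 : ℝ) ^ coincidence (X i) (X k) := fun i k => by
    simp only [zpt2_cross_factor, prod_ite, prod_const, one_pow, mul_one, coincidence]
  simp only [CL2sq, zpt2_diag_factor, hcross, prod_const, card_univ, Fintype.card_fin]
  rw [sum_sum_eq_sum_diag_add_two_mul_sum_pairs _ fun i k => by rw [coincidence_comm]]
  simp only [coincidence_self, sum_const, card_univ, Fintype.card_fin, nsmul_eq_mul]
  field_simp
  ring

theorem CL2sq_identity_and_bound_general (n s : ℕ) (hn : 2 ≤ n)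
    (X : Fin n → Fin s → Fin 2) (hX : IsBalanced X)
    (a₁ : ℝ) (ha₁ : a₁ = 1 / (n : ℝ) * (5 / 4) ^ s + (13 / 12 : ℝ) ^ s
      - 2 * (35 / 32 : ℝ) ^ s)
    (βbar : ℝ) (hβbar : βbar = (s : ℝ) * ((n : ℝ) - 2) / (2 * ((n : ℝ) - 1)))
    (θ : ℕ)
    (f : ℝ) (hf : f = βbar - θ) :
    CL2sq X - a₁ = 2 / (n : ℝ) ^ 2 *
        ∑ p ∈ pairs n, (5 / 4 : ℝ) ^ coincidence (X p.1) (X p.2) ∧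
      2 / (n : ℝ) ^ 2 * ∑ p ∈ pairs n, (5 / 4 : ℝ) ^ coincidence (X p.1) (X p.2)
        ≥ ((n : ℝ) - 1) * (4 + f) / (4 * n) * (5 / 4 : ℝ) ^ θ := by
  have hn1 : (n : ℝ) - 1 ≠ 0 := by
    have : (2 : ℝ) ≤ n := by exact_mod_cast hn
    linarith
  refine ⟨by rw [CL2sq_eq (by omega) X, ha₁]; ring, ?_⟩
  have hpairs : (#(pairs n) : ℝ) = n * (n - 1) / 2 := by rw [card_pairs, Nat.cast_choose_two]
  calc 2 / (n : ℝ) ^ 2 * ∑ p ∈ pairs n, (5 / 4 : ℝ) ^ coincidence (X p.1) (X p.2)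
      ≥ 2 / (n : ℝ) ^ 2 * ((5 / 4) ^ θ *
          ∑ p ∈ pairs n, (1 + (5 / 4 - 1) * ((coincidence (X p.1) (X p.2) : ℝ) - θ))) := by
        gcongr 2 / _ * ?_
        rw [mul_sum]
        exact sum_le_sum fun p _ => pow_mul_one_add_sub_one_mul_le_pow (by norm_num) θ _
    _ = ((n : ℝ) - 1) * (4 + f) / (4 * n) * (5 / 4 : ℝ) ^ θ := by
        simp only [sum_add_distrib, ← mul_sum, sum_sub_distrib, hX.sum_pairs_coincidence,
          sum_const, nsmul_eq_mul, hpairs, hf, hβbar]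
        field_simp
        ring

/-- Corollary 1 (two-level, centered L₂-discrepancy):
CL₂²(X) − a₁ = (2/n²) ∑_{i<k} (5/4)^{β(x_i,x_k)} ≥ ((n−1)(4+f)/(4n)) (5/4)^θ. -/
theorem CL2sq_identity_and_bound (n s : ℕ) (hn : 2 ≤ n)
    (X : Fin n → Fin s → Fin 2) (hX : IsBalanced X)
    (a₁ : ℝ) (ha₁ : a₁ = 1 / (n : ℝ) * (5 / 4) ^ s + (13 / 12 : ℝ) ^ s
      - 2 * (35 / 32 : ℝ) ^ s)
    (βbar : ℝ) (hβbar : βbar = (s : ℝ) * ((n : ℝ) - 2) / (2 * ((n : ℝ) - 1)))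
    (θ : ℕ) (hθ : θ = ⌊βbar⌋₊)
    (f : ℝ) (hf : f = βbar - θ) :
    CL2sq X - a₁ = 2 / (n : ℝ) ^ 2 *
        ∑ p ∈ pairs n, (5 / 4 : ℝ) ^ coincidence (X p.1) (X p.2) ∧
      2 / (n : ℝ) ^ 2 * ∑ p ∈ pairs n, (5 / 4 : ℝ) ^ coincidence (X p.1) (X p.2)
        ≥ ((n : ℝ) - 1) * (4 + f) / (4 * n) * (5 / 4 : ℝ) ^ θ :=
  CL2sq_identity_and_bound_general n s hn X hX a₁ ha₁ βbar hβbar θ f hf
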